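/- For every integer n ≥ 1 and every y ∈ [0, 3^n], one has ∫₀^y σ(t) dt ≥ y / (2n²). -/

import Mathlib

open Filter Topology

noncomputable section

/-- The defining properties of the function `σ` of Section 3 of the paper:
`σ = −1` on `(−1,0]`, `σ = 1` on `(0,1]`, and for every `n ≥ 0`,
`σ(x) = σ(x + 2·3^n) − 1/(n+1)²` on `(−3^{n+1}, −3^n]` and
`σ(x) = σ(x − 2·3^n) + 1/(n+1)²` on `(3^n, 3^{n+1}]`.
These conditions determine `σ` uniquely on all of `ℝ`. -/
def SigmaSpec (σ : ℝ → ℝ) : Prop :=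
  (∀ x : ℝ, -1 < x → x ≤ 0 → σ x = -1) ∧
  (∀ x : ℝ, 0 < x → x ≤ 1 → σ x = 1) ∧
  (∀ (n : ℕ) (x : ℝ), -(3 : ℝ) ^ (n + 1) < x → x ≤ -(3 : ℝ) ^ n →
    σ x = σ (x + 2 * 3 ^ n) - 1 / ((n : ℝ) + 1) ^ 2) ∧
  (∀ (n : ℕ) (x : ℝ), (3 : ℝ) ^ n < x → x ≤ (3 : ℝ) ^ (n + 1) →
    σ x = σ (x - 2 * 3 ^ n) + 1 / ((n : ℝ) + 1) ^ 2)

open MeasureTheory in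
lemma sigma_key (σ : ℝ → ℝ) (hσ : SigmaSpec σ) (n : ℕ) :
    IntervalIntegrable σ volume (-((3:ℝ)^n)) ((3:ℝ)^n) ∧
    (∀ y ∈ Set.Icc (0:ℝ) ((3:ℝ)^n),
      (∫ t in (0:ℝ)..(-y), σ t) = ∫ t in (0:ℝ)..y, σ t) ∧
    (∀ y ∈ Set.Icc (0:ℝ) ((3:ℝ)^n),
      y / (2 * ((max n 1 : ℕ):ℝ)^2) ≤ ∫ t in (0:ℝ)..y, σ t) := by
  obtain ⟨h1, h2, h3, h4⟩ := hσ
  induction n with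
  | zero =>
    simp only [pow_zero]
    have hpos : ∀ y : ℝ, 0 ≤ y → y ≤ 1 → (∫ t in (0:ℝ)..y, σ t) = y := by
      intro y hy0 hy1
      have : (∫ t in (0:ℝ)..y, σ t) = ∫ t in (0:ℝ)..y, (1:ℝ) := by
        apply intervalIntegral.integral_congr_ae
        filter_upwards with x hx
        rw [Set.uIoc_of_le hy0] at hx
        exact h2 x hx.1 (le_trans hx.2 hy1)
      rw [this, intervalIntegral.integral_const]; simp
    have hneg : ∀ y : ℝ, 0 ≤ y → y ≤ 1 → (∫ t in (0:ℝ)..(-y), σ t) = y := by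
      intro y hy0 hy1
      have : (∫ t in (0:ℝ)..(-y), σ t) = ∫ t in (0:ℝ)..(-y), (-1:ℝ) := by
        apply intervalIntegral.integral_congr_ae
        filter_upwards with x hx
        rw [Set.uIoc_of_ge (by linarith)] at hx
        exact h1 x (by linarith [hx.1]) hx.2
      rw [this, intervalIntegral.integral_const]; simp
    refine ⟨?_, ?_, ?_⟩
    · have i1 : IntervalIntegrable σ volume (-1) 0 := by
        rw [intervalIntegrable_iff, Set.uIoc_of_le (by norm_num)]
        refine (integrableOn_const (C := (-1:ℝ)) measure_Ioc_lt_top.ne).congr_fun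
          (fun x hx => (h1 x hx.1 hx.2).symm) measurableSet_Ioc
      have i2 : IntervalIntegrable σ volume 0 1 := by
        rw [intervalIntegrable_iff, Set.uIoc_of_le (by norm_num)]
        refine (integrableOn_const (C := (1:ℝ)) measure_Ioc_lt_top.ne).congr_fun
          (fun x hx => (h2 x hx.1 hx.2).symm) measurableSet_Ioc
      exact i1.trans i2
    · intro y hy
      rw [hpos y hy.1 hy.2, hneg y hy.1 hy.2]
    · intro y hy
      rw [hpos y hy.1 hy.2]
      simp only [Nat.cast_ofNat, max_eq_right (Nat.zero_le 1), Nat.cast_one]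
      nlinarith [hy.1]
  | succ n ih =>
    obtain ⟨hInt, hOdd, hBd⟩ := ih
    set P : ℝ := (3:ℝ)^n with hPdef
    have hP : 0 < P := by positivity
    have h3p : (3:ℝ)^(n+1) = 3*P := by rw [pow_succ]; ring
    set c : ℝ := 1 / ((n:ℝ)+1)^2 with hcdef
    have hc : 0 < c := by positivity
    -- integrability on the positive outer band
    have hIshift : IntervalIntegrable (fun t => σ (t - 2*P)) volume P (3*P) := by
      have h := hInt.comp_sub_right (2*P)
      have e1 : -P + 2*P = P := by ring
      have e2 : P + 2*P = 3*P := by ring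
      rwa [e1, e2] at h
    have hIpos : IntervalIntegrable σ volume P (3*P) := by
      rw [intervalIntegrable_iff, Set.uIoc_of_le (by linarith)]
      have hg : IntegrableOn (fun t => σ (t - 2*P) + c) (Set.Ioc P (3*P)) volume := by
        have h := hIshift.add (intervalIntegrable_const (c := c))
        rwa [intervalIntegrable_iff, Set.uIoc_of_le (by linarith)] at h
      exact hg.congr_fun
        (fun x hx => (h4 n x hx.1 (by rw [h3p]; exact hx.2)).symm) measurableSet_Ioc
    -- integrability on the negative outer band
    have hIshift' : IntervalIntegrable (fun t => σ (t + 2*P)) volume (-(3*P)) (-P) := by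
      have h := hInt.comp_add_right (2*P)
      have e1 : -P - 2*P = -(3*P) := by ring
      have e2 : P - 2*P = -P := by ring
      rwa [e1, e2] at h
    have hIneg : IntervalIntegrable σ volume (-(3*P)) (-P) := by
      rw [intervalIntegrable_iff, Set.uIoc_of_le (by linarith)]
      have hg : IntegrableOn (fun t => σ (t + 2*P) - c) (Set.Ioc (-(3*P)) (-P)) volume := by
        have h := hIshift'.sub (intervalIntegrable_const (c := c))
        rwa [intervalIntegrable_iff, Set.uIoc_of_le (by linarith)] at h
      exact hg.congr_fun
        (fun x hx => (h3 n x (by rw [h3p]; exact hx.1) hx.2).symm) measurableSet_Ioc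
    have hIfull : IntervalIntegrable σ volume (-(3*P)) (3*P) :=
      (hIneg.trans hInt).trans hIpos
    have hsub : ∀ a b : ℝ, -(3*P) ≤ a → a ≤ 3*P → -(3*P) ≤ b → b ≤ 3*P →
        IntervalIntegrable σ volume a b := by
      intro a b ha1 ha2 hb1 hb2
      refine hIfull.mono_set ?_
      rw [Set.uIcc_of_le (by linarith : -(3*P) ≤ 3*P)]
      exact Set.uIcc_subset_Icc ⟨ha1, ha2⟩ ⟨hb1, hb2⟩
    -- evenness of G on [-P,P]
    have hEven : ∀ u : ℝ, -P ≤ u → u ≤ P →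
        (∫ t in (0:ℝ)..u, σ t) = ∫ t in (0:ℝ)..|u|, σ t := by
      intro u hu1 hu2
      rcases le_or_gt 0 u with h | h
      · rw [abs_of_nonneg h]
      · rw [abs_of_neg h]
        have := hOdd (-u) ⟨by linarith, by linarith⟩
        rwa [neg_neg] at this
    -- key computations on (P, 3P]
    have hGpos : ∀ y : ℝ, P < y → y ≤ 3*P →
        (∫ t in (0:ℝ)..y, σ t)
          = (∫ t in (0:ℝ)..|y - 2*P|, σ t) + c*(y-P) := by
      intro y hy1 hy2
      have i0P : IntervalIntegrable σ volume 0 P := hsub 0 P (by linarith) (by linarith) (by linarith) (by linarith)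
      have iPy : IntervalIntegrable σ volume P y := hsub P y (by linarith) (by linarith) (by linarith) (by linarith)
      have hsplit : (∫ t in (0:ℝ)..y, σ t)
          = (∫ t in (0:ℝ)..P, σ t) + ∫ t in P..y, σ t :=
        (intervalIntegral.integral_add_adjacent_intervals i0P iPy).symm
      have hcongr : (∫ t in P..y, σ t) = ∫ t in P..y, (σ (t - 2*P) + c) := by
        apply intervalIntegral.integral_congr_ae
        filter_upwards with x hx
        rw [Set.uIoc_of_le (by linarith)] at hx
        exact h4 n x hx.1 (by rw [h3p]; linarith [hx.2])
      have iSh : IntervalIntegrable (fun t => σ (t - 2*P)) volume P y :=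
        hIshift.mono_set (by
          rw [Set.uIcc_of_le (by linarith : P ≤ 3*P)]
          exact Set.uIcc_subset_Icc ⟨le_refl P, by linarith⟩ ⟨by linarith, hy2⟩)
      have hadd : (∫ t in P..y, (σ (t - 2*P) + c))
          = (∫ t in P..y, σ (t - 2*P)) + c*(y-P) := by
        rw [intervalIntegral.integral_add iSh (intervalIntegrable_const (c := c)), intervalIntegral.integral_const]
        rw [smul_eq_mul]; ring
      have hcs : (∫ t in P..y, σ (t - 2*P)) = ∫ t in (-P)..(y - 2*P), σ t := by
        rw [intervalIntegral.integral_comp_sub_right σ (2*P)]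
        have : P - 2*P = -P := by ring
        rw [this]
      have u := y - 2*P
      have hu1 : -P < y - 2*P := by linarith
      have hu2 : y - 2*P ≤ P := by linarith
      have iN0 : IntervalIntegrable σ volume (-P) 0 := hsub (-P) 0 (by linarith) (by linarith) (by linarith) (by linarith)
      have i0u : IntervalIntegrable σ volume 0 (y - 2*P) := hsub 0 (y-2*P) (by linarith) (by linarith) (by linarith) (by linarith)
      have hsplit2 : (∫ t in (-P)..(y - 2*P), σ t)
          = (∫ t in (-P)..(0:ℝ), σ t) + ∫ t in (0:ℝ)..(y - 2*P), σ t :=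
        (intervalIntegral.integral_add_adjacent_intervals iN0 i0u).symm
      have hN0 : (∫ t in (-P)..(0:ℝ), σ t) = -∫ t in (0:ℝ)..P, σ t := by
        rw [intervalIntegral.integral_symm]
        rw [hOdd P ⟨by linarith, le_refl P⟩]
      have hEvenU := hEven (y - 2*P) (by linarith) hu2
      rw [hsplit, hcongr, hadd, hcs, hsplit2, hN0, hEvenU]
      ring
    have hGneg : ∀ y : ℝ, P < y → y ≤ 3*P →
        (∫ t in (0:ℝ)..(-y), σ t)
          = (∫ t in (0:ℝ)..|y - 2*P|, σ t) + c*(y-P) := by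
      intro y hy1 hy2
      have i0N : IntervalIntegrable σ volume 0 (-P) := hsub 0 (-P) (by linarith) (by linarith) (by linarith) (by linarith)
      have iNy : IntervalIntegrable σ volume (-P) (-y) := hsub (-P) (-y) (by linarith) (by linarith) (by linarith) (by linarith)
      have hsplit : (∫ t in (0:ℝ)..(-y), σ t)
          = (∫ t in (0:ℝ)..(-P), σ t) + ∫ t in (-P)..(-y), σ t :=
        (intervalIntegral.integral_add_adjacent_intervals i0N iNy).symm
      have hcongr : (∫ t in (-P)..(-y), σ t) = ∫ t in (-P)..(-y), (σ (t + 2*P) - c) := by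
        apply intervalIntegral.integral_congr_ae
        filter_upwards with x hx
        rw [Set.uIoc_of_ge (by linarith)] at hx
        exact h3 n x (by rw [h3p]; linarith [hx.1]) hx.2
      have iSh : IntervalIntegrable (fun t => σ (t + 2*P)) volume (-P) (-y) :=
        hIshift'.mono_set (by
          rw [Set.uIcc_of_le (by linarith : -(3*P) ≤ -P)]
          exact Set.uIcc_subset_Icc ⟨by linarith, le_refl (-P)⟩ ⟨by linarith, by linarith⟩)
      have hadd : (∫ t in (-P)..(-y), (σ (t + 2*P) - c))
          = (∫ t in (-P)..(-y), σ (t + 2*P)) + c*(y-P) := by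
        rw [intervalIntegral.integral_sub iSh (intervalIntegrable_const (c := c)), intervalIntegral.integral_const]
        rw [smul_eq_mul]; ring
      have hcs : (∫ t in (-P)..(-y), σ (t + 2*P)) = ∫ t in P..(2*P - y), σ t := by
        rw [intervalIntegral.integral_comp_add_right σ (2*P)]
        have e1 : -P + 2*P = P := by ring
        have e2 : -y + 2*P = 2*P - y := by ring
        rw [e1, e2]
      have iPv : IntervalIntegrable σ volume P (2*P - y) := hsub P (2*P-y) (by linarith) (by linarith) (by linarith) (by linarith)
      have i0P : IntervalIntegrable σ volume 0 P := hsub 0 P (by linarith) (by linarith) (by linarith) (by linarith)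
      have hsplit2 : (∫ t in (0:ℝ)..P, σ t) + (∫ t in P..(2*P - y), σ t)
          = ∫ t in (0:ℝ)..(2*P - y), σ t :=
        intervalIntegral.integral_add_adjacent_intervals i0P iPv
      have hOddP := hOdd P ⟨by linarith, le_refl P⟩
      have hEvenV := hEven (2*P - y) (by linarith) (by linarith)
      have habs : |2*P - y| = |y - 2*P| := abs_sub_comm _ _
      rw [hsplit, hcongr, hadd, hcs, hOddP]
      have : (∫ t in P..(2*P - y), σ t)
          = (∫ t in (0:ℝ)..(2*P - y), σ t) - ∫ t in (0:ℝ)..P, σ t := by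
        linarith [hsplit2]
      rw [this, hEvenV, habs]
      ring
    have hmax : ((max (n+1) 1 : ℕ):ℝ) = (n:ℝ)+1 := by
      rw [max_eq_left (Nat.le_add_left 1 n)]
      push_cast; ring
    have hmaxn : ((max n 1 : ℕ):ℝ) ≤ (n:ℝ)+1 := by
      rcases Nat.eq_zero_or_pos n with h | h
      · subst h; norm_num
      · rw [max_eq_left h]; linarith
    have hmaxpos : (0:ℝ) < ((max n 1 : ℕ):ℝ) := by
      have : 1 ≤ max n 1 := le_max_right n 1
      exact_mod_cast Nat.lt_of_lt_of_le Nat.zero_lt_one this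
    refine ⟨?_, ?_, ?_⟩
    · rw [h3p]; exact hIfull
    · intro y hy
      rw [h3p] at hy
      rcases le_or_gt y P with h | h
      · exact hOdd y ⟨hy.1, h⟩
      · rw [hGpos y h hy.2, hGneg y h hy.2]
    · intro y hy
      rw [h3p] at hy
      rw [hmax]
      have hnp1 : (0:ℝ) < ((n:ℝ)+1)^2 := by positivity
      rcases le_or_gt y P with h | h
      · have hb := hBd y ⟨hy.1, h⟩
        have : y / (2 * ((n:ℝ)+1)^2) ≤ y / (2 * ((max n 1 : ℕ):ℝ)^2) := by
          gcongr
          exact hy.1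
        linarith
      · have hu1 : -P < y - 2*P := by linarith
        have hu2 : y - 2*P ≤ P := by linarith [hy.2]
        have habs0 : 0 ≤ |y - 2*P| := abs_nonneg _
        have habsP : |y - 2*P| ≤ P := abs_le.2 ⟨by linarith, hu2⟩
        have hb := hBd |y - 2*P| ⟨habs0, habsP⟩
        have hmono : |y - 2*P| / (2 * ((n:ℝ)+1)^2)
            ≤ |y - 2*P| / (2 * ((max n 1 : ℕ):ℝ)^2) := by
          gcongr
        have hlow : |y - 2*P| ≥ 2*P - y := by
          have := neg_abs_le (y - 2*P)
          linarith
        rw [hGpos y h hy.2]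
        have key : y / (2 * ((n:ℝ)+1)^2)
            ≤ |y - 2*P| / (2 * ((n:ℝ)+1)^2) + c*(y-P) := by
          have hnum : 0 ≤ (|y - 2*P| + 2*(y-P) - y) / (2*((n:ℝ)+1)^2) :=
            div_nonneg (by linarith) (by positivity)
          have heq : |y - 2*P| / (2 * ((n:ℝ)+1)^2) + c*(y-P) - y / (2 * ((n:ℝ)+1)^2)
              = (|y - 2*P| + 2*(y-P) - y) / (2*((n:ℝ)+1)^2) := by
            rw [hcdef]; field_simp
          linarith
        linarith

/-- For every integer `n ≥ 1` and every `y ∈ [0, 3^n]`, one has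
`∫₀^y σ(t) dt ≥ y / (2n²)`. -/
theorem sigma_integral_lower_bound_on_band (σ : ℝ → ℝ) (hσ : SigmaSpec σ) :
    ∀ n : ℕ, 1 ≤ n → ∀ y ∈ Set.Icc (0 : ℝ) ((3 : ℝ) ^ n),
      y / (2 * (n : ℝ) ^ 2) ≤ ∫ t in (0 : ℝ)..y, σ t := by
  intro n hn y hy
  have h := (sigma_key σ hσ n).2.2 y hy
  rwa [max_eq_left hn] at h
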